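/- If A and B are self-adjoint operators on a Hilbert space with ±B ≤ A as quadratic forms (i.e. |⟨x, B x⟩| ≤ ⟨x, A x⟩ for all x), then for all vectors f, g one has |⟨f, B g⟩| ≤ 3 ⟨f, A f⟩^{1/2} ⟨g, A g⟩^{1/2}. -/

import Mathlib

open scoped InnerProductSpace
open Complex

private lemma csfb_key {H : Type*} [NormedAddCommGroup H] [InnerProductSpace ℂ H]
    (A B : H →L[ℂ] H)
    (hAB : ∀ x : H, ‖⟪x, B x⟫_ℂ‖ ≤ (⟪x, A x⟫_ℂ).re)
    (f g : H) :
    ‖⟪f, B g⟫_ℂ‖ ≤ (⟪f, A f⟫_ℂ).re + (⟪g, A g⟫_ℂ).re := by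
  have expand : ∀ (T : H →L[ℂ] H) (c : ℂ), ⟪f + c•g, T (f + c•g)⟫_ℂ =
      ⟪f, T f⟫_ℂ + c * ⟪f, T g⟫_ℂ + (starRingEnd ℂ c) * ⟪g, T f⟫_ℂ
        + (starRingEnd ℂ c * c) * ⟪g, T g⟫_ℂ := by
    intro T c
    simp [map_add, map_smul, inner_add_left, inner_add_right, inner_smul_left,
      inner_smul_right]
    ring
  set x := ⟪f, B g⟫_ℂ with hx
  have pol : x = (⟪f + (1:ℂ)•g, B (f + (1:ℂ)•g)⟫_ℂ
      + (-I) * ⟪f + I•g, B (f + I•g)⟫_ℂ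
      + (-1) * ⟪f + (-1:ℂ)•g, B (f + (-1:ℂ)•g)⟫_ℂ
      + I * ⟪f + (-I)•g, B (f + (-I)•g)⟫_ℂ) / 4 := by
    rw [expand B 1, expand B I, expand B (-1), expand B (-I)]
    simp only [map_one, map_neg, Complex.conj_I, one_mul, neg_neg]
    field_simp
    linear_combination (2*⟪f, B g⟫_ℂ - 2*⟪g, B f⟫_ℂ) * Complex.I_sq
  have sumA : ⟪f + (1:ℂ)•g, A (f + (1:ℂ)•g)⟫_ℂ
      + ⟪f + I•g, A (f + I•g)⟫_ℂ
      + ⟪f + (-1:ℂ)•g, A (f + (-1:ℂ)•g)⟫_ℂ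
      + ⟪f + (-I)•g, A (f + (-I)•g)⟫_ℂ
      = 4*⟪f, A f⟫_ℂ + 4*⟪g, A g⟫_ℂ := by
    rw [expand A 1, expand A I, expand A (-1), expand A (-I)]
    simp only [map_one, map_neg, Complex.conj_I, one_mul, neg_neg]
    linear_combination (-2*⟪g, A g⟫_ℂ) * Complex.I_sq
  have hnorm : ‖x‖ ≤ (‖⟪f + (1:ℂ)•g, B (f + (1:ℂ)•g)⟫_ℂ‖
      + ‖⟪f + I•g, B (f + I•g)⟫_ℂ‖
      + ‖⟪f + (-1:ℂ)•g, B (f + (-1:ℂ)•g)⟫_ℂ‖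
      + ‖⟪f + (-I)•g, B (f + (-I)•g)⟫_ℂ‖) / 4 := by
    rw [pol, norm_div]
    have h4 : ‖(4:ℂ)‖ = 4 := by norm_num
    rw [h4]
    gcongr
    refine le_trans (norm_add_le _ _) ?_
    refine le_trans (add_le_add_left (norm_add_le _ _) _) ?_
    refine le_trans (add_le_add_left (add_le_add_left (norm_add_le _ _) _) _) ?_
    simp [norm_mul]
    exact le_of_eq (by rw [← norm_neg]; congr 1; ring)
  have hsumre : (⟪f + (1:ℂ)•g, A (f + (1:ℂ)•g)⟫_ℂ).re
      + (⟪f + I•g, A (f + I•g)⟫_ℂ).re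
      + (⟪f + (-1:ℂ)•g, A (f + (-1:ℂ)•g)⟫_ℂ).re
      + (⟪f + (-I)•g, A (f + (-I)•g)⟫_ℂ).re
      = 4 * (⟪f, A f⟫_ℂ).re + 4 * (⟪g, A g⟫_ℂ).re := by
    have h := congrArg Complex.re sumA
    simpa [Complex.add_re, Complex.mul_re] using h
  have hstep : ‖x‖ ≤ ((⟪f + (1:ℂ)•g, A (f + (1:ℂ)•g)⟫_ℂ).re
      + (⟪f + I•g, A (f + I•g)⟫_ℂ).re
      + (⟪f + (-1:ℂ)•g, A (f + (-1:ℂ)•g)⟫_ℂ).re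
      + (⟪f + (-I)•g, A (f + (-I)•g)⟫_ℂ).re) / 4 := by
    refine le_trans hnorm ?_
    gcongr <;> exact hAB _
  rw [hsumre] at hstep
  linarith

/-- If `±B ≤ A` as quadratic forms, then `|⟨f, B g⟩| ≤ 3 ⟨f,Af⟩^{1/2} ⟨g,Ag⟩^{1/2}`. -/
theorem cauchy_schwarz_type_for_form_bounded_operator
    {H : Type*} [NormedAddCommGroup H] [InnerProductSpace ℂ H] [CompleteSpace H]
    (A B : H →L[ℂ] H) (hA : IsSelfAdjoint A) (hB : IsSelfAdjoint B)
    (hAB : ∀ x : H, ‖⟪x, B x⟫_ℂ‖ ≤ (⟪x, A x⟫_ℂ).re)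
    (f g : H) :
    ‖⟪f, B g⟫_ℂ‖ ≤ 3 * Real.sqrt (⟪f, A f⟫_ℂ).re * Real.sqrt (⟪g, A g⟫_ℂ).re := by
  set a := (⟪f, A f⟫_ℂ).re with ha'
  set b := (⟪g, A g⟫_ℂ).re with hb'
  have ha : 0 ≤ a := le_trans (norm_nonneg _) (hAB f)
  have hb : 0 ≤ b := le_trans (norm_nonneg _) (hAB g)
  have scaled : ∀ s : ℝ, 0 < s → ‖⟪f, B g⟫_ℂ‖ ≤ s * a + s⁻¹ * b := by
    intro s hs
    set t := Real.sqrt s with ht'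
    have ht : 0 < t := Real.sqrt_pos.mpr hs
    have ht2 : t * t = s := Real.mul_self_sqrt hs.le
    have h := csfb_key A B hAB ((t:ℂ) • f) (((t⁻¹ : ℝ) : ℂ) • g)
    have e1 : ⟪(t:ℂ) • f, B (((t⁻¹ : ℝ) : ℂ) • g)⟫_ℂ = (t:ℂ) * ((t⁻¹ : ℝ) : ℂ) * ⟪f, B g⟫_ℂ := by
      rw [map_smul, inner_smul_left, inner_smul_right, Complex.conj_ofReal]; ring
    have e2 : ⟪(t:ℂ) • f, A ((t:ℂ) • f)⟫_ℂ = (t:ℂ) * (t:ℂ) * ⟪f, A f⟫_ℂ := by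
      rw [map_smul, inner_smul_left, inner_smul_right, Complex.conj_ofReal]; ring
    have e3 : ⟪((t⁻¹ : ℝ) : ℂ) • g, A (((t⁻¹ : ℝ) : ℂ) • g)⟫_ℂ = ((t⁻¹ : ℝ) : ℂ) * ((t⁻¹ : ℝ) : ℂ) * ⟪g, A g⟫_ℂ := by
      rw [map_smul, inner_smul_left, inner_smul_right, Complex.conj_ofReal]; ring
    rw [e1, e2, e3] at h
    have hnx : ‖(t:ℂ) * ((t⁻¹ : ℝ) : ℂ) * ⟪f, B g⟫_ℂ‖ = ‖⟪f, B g⟫_ℂ‖ := by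
      have h1 : (t:ℂ) * ((t⁻¹ : ℝ) : ℂ) = 1 := by
        push_cast
        field_simp
        exact div_self (by exact_mod_cast ht.ne' : (t:ℂ) ≠ 0)
      rw [h1, one_mul]
    have hre2 : ((t:ℂ) * (t:ℂ) * ⟪f, A f⟫_ℂ).re = s * a := by
      rw [← Complex.ofReal_mul, Complex.re_ofReal_mul, ht2, ha']
    have hre3 : (((t⁻¹ : ℝ) : ℂ) * ((t⁻¹ : ℝ) : ℂ) * ⟪g, A g⟫_ℂ).re = s⁻¹ * b := by
      rw [← Complex.ofReal_mul, Complex.re_ofReal_mul, ← mul_inv, ht2, hb']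
    rw [hnx, hre2, hre3] at h
    exact h
  have h2 : ‖⟪f, B g⟫_ℂ‖ ≤ 2 * Real.sqrt a * Real.sqrt b := by
    refine le_of_forall_pos_le_add fun ε hε => ?_
    set δ := ε / (Real.sqrt a + Real.sqrt b + 1) with hδ'
    have hden : 0 < Real.sqrt a + Real.sqrt b + 1 := by positivity
    have hδ : 0 < δ := div_pos hε hden
    set s := (Real.sqrt b + δ) / (Real.sqrt a + δ) with hs'
    have hs : 0 < s := div_pos (by positivity) (by positivity)
    have key := scaled s hs
    have hsa : s * a ≤ Real.sqrt a * (Real.sqrt b + δ) := by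
      rw [hs', div_mul_eq_mul_div, div_le_iff₀ (by positivity)]
      have : a ≤ Real.sqrt a * (Real.sqrt a + δ) := by
        nlinarith [Real.sq_sqrt ha, Real.sqrt_nonneg a]
      nlinarith [Real.sqrt_nonneg a, Real.sqrt_nonneg b, hδ]
    have hsb : s⁻¹ * b ≤ Real.sqrt b * (Real.sqrt a + δ) := by
      rw [hs', inv_div, div_mul_eq_mul_div, div_le_iff₀ (by positivity)]
      have : b ≤ Real.sqrt b * (Real.sqrt b + δ) := by
        nlinarith [Real.sq_sqrt hb, Real.sqrt_nonneg b]
      nlinarith [Real.sqrt_nonneg a, Real.sqrt_nonneg b, hδ]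
    have hδsmall : δ * (Real.sqrt a + Real.sqrt b) ≤ ε := by
      rw [hδ', div_mul_eq_mul_div, div_le_iff₀ hden]
      nlinarith [Real.sqrt_nonneg a, Real.sqrt_nonneg b]
    nlinarith [Real.sqrt_nonneg a, Real.sqrt_nonneg b]
  have h3 : 0 ≤ Real.sqrt a * Real.sqrt b := by positivity
  nlinarith
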